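/- Let G = (V,E) be a connected graph on n vertices, let D ≥ 2 be its diameter, and let s, r be positive reals with r ≥ 4. Suppose that: (1) for every set S ⊆ V with |S| ≤ s, the set of vertices at distance exactly D from every vertex of S has size at least r/2; and (2) for every set R ⊆ V with |R| ≥ r/4, the set V \ N(R,1) has size at most r/4. Then the robber wins the localization game with s sensors on G; in particular ζ(G) > s. -/
import Mathlib


open Filter SimpleGraph Set
open scoped Topology

noncomputable section

/-- The probability, under the Erdős–Rényi binomial random graph `G(n,p)`, of a set `A`
of graphs on vertex set `Fin n`: each pair of distinct vertices is an edge
independently with probability `p`. -/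
noncomputable def gnpProb (n : ℕ) (p : ℝ) (A : Set (SimpleGraph (Fin n))) : ℝ := by
  classical
  exact ∑ G ∈ Finset.univ.filter (fun G : SimpleGraph (Fin n) => G ∈ A),
      p ^ (Nat.card G.edgeSet) * (1 - p) ^ (n.choose 2 - Nat.card G.edgeSet)

/-- A sequence of graph events `A n ⊆ G(n, p n)` holds asymptotically almost surely. -/
def AAS (p : ℕ → ℝ) (A : (n : ℕ) → Set (SimpleGraph (Fin n))) : Prop :=
  Tendsto (fun n : ℕ => gnpProb n (p n) (A n)) atTop (nhds 1)

/-- The set of vertices at graph distance exactly `j` from `v`. -/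
def gSphere {V : Type*} (G : SimpleGraph V) (v : V) (j : ℕ) : Set V :=
  {u | G.edist v u = j}

/-- The set of vertices at graph distance at most `j` from some vertex of `A`. -/
def gBall {V : Type*} (G : SimpleGraph V) (A : Set V) (j : ℕ) : Set V :=
  {u | ∃ v ∈ A, G.edist v u ≤ j}

/-- The result of probing with sensor set `S` while the robber is at `v`: the cops
learn the sensor set together with the distance from each sensor to the robber. -/
noncomputable def probe {V : Type*} (G : SimpleGraph V) (S : Finset V) (v : V) :
    Finset V × (V → ℕ) := by
  classical
  exact (S, fun s => if s ∈ S then G.dist s v else 0)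

/-- A cop strategy: given the list of past probe results, choose the next sensor set. -/
def CopStrategy (V : Type*) : Type _ := List (Finset V × (V → ℕ)) → Finset V

/-- A robber trajectory: at each step the robber either stays or moves along an edge. -/
def IsRobberWalk {V : Type*} (G : SimpleGraph V) (w : ℕ → V) : Prop :=
  ∀ t, w (t + 1) = w t ∨ G.Adj (w t) (w (t + 1))

/-- The history of probe results produced in the first `t` rounds when the cops play
strategy `σ` against the robber walk `w` (round `t+1` probes position `w t`). -/
noncomputable def gameHistory {V : Type*} (G : SimpleGraph V) (σ : CopStrategy V)
    (w : ℕ → V) : ℕ → List (Finset V × (V → ℕ))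
  | 0 => []
  | t + 1 => gameHistory G σ w t ++ [probe G (σ (gameHistory G σ w t)) (w t)]

/-- The cops win the localization game on `G` with `k` sensors: there is a strategy,
probing exactly `k` vertices each round, such that for every robber walk there is a
round in which every robber walk producing the same probe results is at the same
vertex, i.e. the cops can locate the robber. -/
def CopsWin {V : Type*} (G : SimpleGraph V) (k : ℕ) : Prop :=
  ∃ σ : CopStrategy V, (∀ h, (σ h).card = k) ∧
    ∀ w : ℕ → V, IsRobberWalk G w → ∃ t : ℕ,
      ∀ w' : ℕ → V, IsRobberWalk G w' →
        gameHistory G σ w' (t + 1) = gameHistory G σ w (t + 1) → w' t = w t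

/-- The localization number `ζ(G)`: the least number of sensors with which the cops
can win the localization game on `G`. -/
noncomputable def localizationNumber {V : Type*} (G : SimpleGraph V) : ℕ :=
  sInf {k | CopsWin G k}

end

noncomputable section AuxRobber

set_option linter.unusedSectionVars false

namespace LocAux

variable {V : Type*} [Fintype V] [DecidableEq V]

/-- Vertices at distance exactly `diam` from every sensor of `S`. -/
def Fset (G : SimpleGraph V) (S : Finset V) : Set V :=
  {v : V | ∀ u ∈ S, G.edist u v = (G.diam : ℕ∞)}

/-- The constant probe answer. -/
noncomputable def pconst (G : SimpleGraph V) (S : Finset V) : V → ℕ :=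
  fun u => if u ∈ S then G.diam else 0

/-- The fixed history the robber forces. -/
noncomputable def fakeHist (G : SimpleGraph V) (σ : CopStrategy V) :
    ℕ → List (Finset V × (V → ℕ))
  | 0 => []
  | t + 1 => fakeHist G σ t ++ [(σ (fakeHist G σ t), pconst G (σ (fakeHist G σ t)))]

/-- Candidate positions of the robber at each time. -/
noncomputable def Cset (G : SimpleGraph V) (σ : CopStrategy V) : ℕ → Set V
  | 0 => Fset G (σ (fakeHist G σ 0))
  | t + 1 => Fset G (σ (fakeHist G σ (t + 1))) ∩ gBall G (Cset G σ t) 1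

lemma Cset_succ (G : SimpleGraph V) (σ : CopStrategy V) (t : ℕ) :
    Cset G σ (t + 1) = Fset G (σ (fakeHist G σ (t + 1))) ∩ gBall G (Cset G σ t) 1 := rfl

lemma probe_eq_of_mem_Fset {G : SimpleGraph V} {S : Finset V} {v : V}
    (hv : v ∈ Fset G S) : probe G S v = (S, pconst G S) := by
  unfold probe
  simp only [Prod.mk.injEq, true_and]
  funext u
  by_cases hu : u ∈ S
  · have h := hv u hu
    simp [pconst, hu, SimpleGraph.dist, h]
  · simp [pconst, hu]

lemma Cset_subset_Fset (G : SimpleGraph V) (σ : CopStrategy V) (t : ℕ) :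
    Cset G σ t ⊆ Fset G (σ (fakeHist G σ t)) := by
  cases t with
  | zero => exact subset_rfl
  | succ t => exact Set.inter_subset_left

lemma gameHistory_eq_fakeHist {G : SimpleGraph V} {σ : CopStrategy V} {w : ℕ → V} (t : ℕ)
    (hw : ∀ t' < t, w t' ∈ Cset G σ t') :
    gameHistory G σ w t = fakeHist G σ t := by
  induction t with
  | zero => rfl
  | succ t ih =>
    have ih' := ih (fun t' ht' => hw t' (ht'.trans (Nat.lt_succ_self t)))
    have hmem : w t ∈ Fset G (σ (fakeHist G σ t)) :=
      Cset_subset_Fset G σ t (hw t (Nat.lt_succ_self t))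
    show gameHistory G σ w t ++ [probe G (σ (gameHistory G σ w t)) (w t)] = _
    rw [ih', probe_eq_of_mem_Fset hmem]
    rfl

lemma eq_or_adj_of_edist_le_one {G : SimpleGraph V} {x v : V} (h : G.edist x v ≤ 1) :
    x = v ∨ G.Adj x v := by
  rcases eq_or_ne (G.edist x v) 0 with h0 | h0
  · exact Or.inl (SimpleGraph.edist_eq_zero_iff.mp h0)
  · exact Or.inr (SimpleGraph.edist_eq_one_iff_adj.mp
      (le_antisymm h (ENat.one_le_iff_ne_zero.mpr h0)))

lemma mem_of_succ {G : SimpleGraph V} {σ : CopStrategy V} {t : ℕ} {v : V}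
    (hv : v ∈ Cset G σ (t + 1)) : ∃ x ∈ Cset G σ t, x = v ∨ G.Adj x v := by
  obtain ⟨x, hx, hxe⟩ := hv.2
  exact ⟨x, hx, eq_or_adj_of_edist_le_one hxe⟩

/-- Backward construction of a finite consistent walk ending at `v ∈ Cset t`. -/
lemma exists_walk_to {G : SimpleGraph V} {σ : CopStrategy V} :
    ∀ t, ∀ v ∈ Cset G σ t, ∃ w : ℕ → V, IsRobberWalk G w ∧
      (∀ t' ≤ t, w t' ∈ Cset G σ t') ∧ (∀ t' ≥ t, w t' = v) := by
  intro t
  induction t with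
  | zero =>
    intro v hv
    refine ⟨fun _ => v, fun _ => Or.inl rfl, ?_, fun _ _ => rfl⟩
    intro t' ht'
    have : t' = 0 := Nat.le_zero.mp ht'
    subst this; exact hv
  | succ t ih =>
    intro v hv
    obtain ⟨x, hx, hstep⟩ := mem_of_succ hv
    obtain ⟨w, hwalk, hmem, hconst⟩ := ih x hx
    refine ⟨fun i => if i ≤ t then w i else v, ?_, ?_, ?_⟩
    · intro i
      beta_reduce
      rcases lt_trichotomy i t with hi | hi | hi
      · rw [if_pos (Nat.le_of_lt hi), if_pos (Nat.succ_le_of_lt hi)]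
        exact hwalk i
      · subst hi
        rw [if_pos le_rfl, if_neg (by omega : ¬ i + 1 ≤ i), hconst i le_rfl]
        rcases hstep with h | h
        · exact Or.inl h.symm
        · exact Or.inr h
      · rw [if_neg (by omega : ¬ i ≤ t), if_neg (by omega : ¬ i + 1 ≤ t)]
        exact Or.inl rfl
    · intro t' ht'
      beta_reduce
      rcases Nat.lt_succ_iff_lt_or_eq.mp (Nat.lt_succ_of_le ht') with h | h
      · rw [if_pos (show t' ≤ t by omega)]
        exact hmem t' (by omega)
      · subst h
        rw [if_neg (by omega : ¬ t + 1 ≤ t)]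
        exact hv
    · intro t' ht'
      beta_reduce
      rw [if_neg (by omega : ¬ t' ≤ t)]

/-- A decreasing sequence of nonempty sets in a finite type has nonempty intersection. -/
lemma iInter_nonempty_of_antitone {A : ℕ → Set V} (hne : ∀ n, (A n).Nonempty)
    (hmono : ∀ n, A (n + 1) ⊆ A n) : (⋂ n, A n).Nonempty := by
  classical
  have hchain : ∀ m n, m ≤ n → A n ⊆ A m := by
    intro m n h
    induction n, h using Nat.le_induction with
    | base => exact subset_rfl
    | succ n hn ih => exact (hmono n).trans ih
  obtain ⟨n0, hn0⟩ : ∃ n0, (A n0).ncard = sInf (Set.range fun n => (A n).ncard) :=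
    Nat.sInf_mem (Set.range_nonempty _)
  have hsub : ∀ n, A n0 ⊆ A n := by
    intro n
    rcases le_total n n0 with h | h
    · exact hchain n n0 h
    · have heq : A n = A n0 := by
        refine Set.eq_of_subset_of_ncard_le (hchain n0 n h) ?_ (Set.toFinite _)
        rw [hn0]
        exact Nat.sInf_le ⟨n, rfl⟩
      exact heq.symm.subset
  obtain ⟨v, hv⟩ := hne n0
  exact ⟨v, Set.mem_iInter.mpr fun n => hsub n hv⟩

/-- `v ∈ Cset t` can be extended `n` more steps through the candidate sets. -/
def Ext (G : SimpleGraph V) (σ : CopStrategy V) (t : ℕ) (v : V) (n : ℕ) : Prop :=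
  ∃ f : ℕ → V, f t = v ∧
    (∀ i, t ≤ i → i < t + n → (f (i + 1) = f i ∨ G.Adj (f i) (f (i + 1)))) ∧
    (∀ i, t ≤ i → i ≤ t + n → f i ∈ Cset G σ i)

lemma Ext_anti {G : SimpleGraph V} {σ : CopStrategy V} {t : ℕ} {v : V} {n : ℕ}
    (h : Ext G σ t v (n + 1)) : Ext G σ t v n := by
  obtain ⟨f, hf, hw, hm⟩ := h
  exact ⟨f, hf, fun i h1 h2 => hw i h1 (by omega), fun i h1 h2 => hm i h1 (by omega)⟩

lemma Ext_mem {G : SimpleGraph V} {σ : CopStrategy V} {t : ℕ} {v : V} {n : ℕ}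
    (h : Ext G σ t v n) : v ∈ Cset G σ t := by
  obtain ⟨f, hf, _, hm⟩ := h
  have := hm t le_rfl (by omega)
  rwa [hf] at this

lemma Ext_exists {G : SimpleGraph V} {σ : CopStrategy V}
    (hne : ∀ t, (Cset G σ t).Nonempty) :
    ∀ n t, ∃ v, Ext G σ t v n := by
  intro n
  induction n with
  | zero =>
    intro t
    obtain ⟨v, hv⟩ := hne t
    refine ⟨v, fun _ => v, rfl, fun i h1 h2 => absurd h2 (by omega), ?_⟩
    intro i h1 h2
    have : i = t := by omega
    subst this; exact hv
  | succ n ih =>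
    intro t
    obtain ⟨u, f, hf, hw, hm⟩ := ih (t + 1)
    have hu : u ∈ Cset G σ (t + 1) := by
      have := hm (t + 1) le_rfl (by omega)
      rwa [hf] at this
    obtain ⟨x, hx, hstep⟩ := mem_of_succ hu
    refine ⟨x, fun i => if i ≤ t then x else f i, by simp, ?_, ?_⟩
    · intro i h1 h2
      beta_reduce
      rcases eq_or_lt_of_le h1 with h | h
      · subst h
        rw [if_pos le_rfl, if_neg (by omega : ¬ t + 1 ≤ t), hf]
        rcases hstep with h | h
        · exact Or.inl h.symm
        · exact Or.inr h
      · rw [if_neg (by omega : ¬ i ≤ t), if_neg (by omega : ¬ i + 1 ≤ t)]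
        exact hw i (by omega) (by omega)
    · intro i h1 h2
      beta_reduce
      rcases eq_or_lt_of_le h1 with h | h
      · subst h
        rw [if_pos le_rfl]
        exact hx
      · rw [if_neg (by omega : ¬ i ≤ t)]
        exact hm i (by omega) (by omega)

lemma exists_next {G : SimpleGraph V} {σ : CopStrategy V} {t : ℕ} {v : V}
    (hv : ∀ n, Ext G σ t v n) :
    ∃ u, (∀ n, Ext G σ (t + 1) u n) ∧ (u = v ∨ G.Adj v u) := by
  classical
  set B : ℕ → Set V := fun n => {u | (u = v ∨ G.Adj v u) ∧ Ext G σ (t + 1) u n} with hB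
  have hne : ∀ n, (B n).Nonempty := by
    intro n
    obtain ⟨f, hf, hw, hm⟩ := hv (n + 1)
    refine ⟨f (t + 1), ?_, f, rfl, fun i h1 h2 => hw i (by omega) (by omega),
      fun i h1 h2 => hm i (by omega) (by omega)⟩
    have := hw t le_rfl (by omega)
    rw [hf] at this
    rcases this with h | h
    · exact Or.inl h
    · exact Or.inr h
  have hmono : ∀ n, B (n + 1) ⊆ B n := fun n u hu => ⟨hu.1, Ext_anti hu.2⟩
  obtain ⟨u, hu⟩ := iInter_nonempty_of_antitone hne hmono
  have hu' : ∀ n, u ∈ B n := fun n => Set.mem_iInter.mp hu n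
  exact ⟨u, fun n => (hu' n).2, (hu' 0).1⟩

lemma exists_infinite_walk {G : SimpleGraph V} {σ : CopStrategy V}
    (hne : ∀ t, (Cset G σ t).Nonempty) :
    ∃ w : ℕ → V, IsRobberWalk G w ∧ ∀ t, w t ∈ Cset G σ t := by
  classical
  have h0 : ∃ v, ∀ n, Ext G σ 0 v n := by
    have := iInter_nonempty_of_antitone (A := fun n => {v | Ext G σ 0 v n})
      (fun n => Ext_exists hne n 0) (fun n u hu => Ext_anti hu)
    obtain ⟨v, hv⟩ := this
    exact ⟨v, fun n => Set.mem_iInter.mp hv n⟩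
  have hstep : ∀ t (v : V), (∀ n, Ext G σ t v n) →
      ∃ u, (∀ n, Ext G σ (t + 1) u n) ∧ (u = v ∨ G.Adj v u) := fun t v hv => exists_next hv
  choose nxt hnxt1 hnxt2 using hstep
  obtain ⟨v0, hv0⟩ := h0
  let g : (t : ℕ) → {v : V // ∀ n, Ext G σ t v n} :=
    fun t => Nat.rec ⟨v0, hv0⟩ (fun t p => ⟨nxt t p.1 p.2, hnxt1 t p.1 p.2⟩) t
  refine ⟨fun t => (g t).1, ?_, ?_⟩
  · intro t
    exact hnxt2 t (g t).1 (g t).2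
  · intro t
    exact Ext_mem ((g t).2 0)

lemma subset_gBall_one {G : SimpleGraph V} (R : Set V) : R ⊆ gBall G R 1 := by
  intro v hv
  exact ⟨v, hv, by simp [SimpleGraph.edist_self]⟩

lemma step_card {G : SimpleGraph V} (hD : 2 ≤ G.diam)
    {s r : ℝ} (hr : 4 ≤ r)
    (h1 : ∀ S : Finset V, (S.card : ℝ) ≤ s →
      r / 2 ≤ (({v : V | ∀ u ∈ S, G.edist u v = (G.diam : ℕ∞)}).ncard : ℝ))
    (h2 : ∀ R : Finset V, r / 4 ≤ (R.card : ℝ) →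
      ((Set.univ \ gBall G ↑R 1).ncard : ℝ) ≤ r / 4)
    {S : Finset V} (hS : (S.card : ℝ) ≤ s) {R : Set V}
    (hR2 : 2 ≤ R.ncard) (hRr : r / 4 ≤ (R.ncard : ℝ)) :
    2 ≤ (Fset G S ∩ gBall G R 1).ncard ∧
      r / 4 ≤ ((Fset G S ∩ gBall G R 1).ncard : ℝ) := by
  classical
  set F := Fset G S with hF
  set B := gBall G R 1 with hB
  have hFcard : r / 2 ≤ (F.ncard : ℝ) := h1 S hS
  have hNcard : ((Set.univ \ B).ncard : ℝ) ≤ r / 4 := by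
    have hcoe : (↑(R.toFinite.toFinset) : Set V) = R := R.toFinite.coe_toFinset
    have hcard : (R.toFinite.toFinset).card = R.ncard :=
      (Set.ncard_eq_toFinset_card R R.toFinite).symm
    have := h2 R.toFinite.toFinset (by rw [hcard]; exact hRr)
    rwa [hcoe] at this
  have hsplit : (F ∩ B).ncard + (F \ B).ncard = F.ncard :=
    Set.ncard_inter_add_ncard_diff_eq_ncard F B (Set.toFinite F)
  have hdiffle : (F \ B).ncard ≤ (Set.univ \ B).ncard :=
    Set.ncard_le_ncard (Set.diff_subset_diff_left (Set.subset_univ F)) (Set.toFinite _)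
  have hreal : r / 4 ≤ ((F ∩ B).ncard : ℝ) := by
    have h1' : (F.ncard : ℝ) = ((F ∩ B).ncard : ℝ) + ((F \ B).ncard : ℝ) := by
      exact_mod_cast hsplit.symm
    have h2' : ((F \ B).ncard : ℝ) ≤ r / 4 :=
      le_trans (by exact_mod_cast hdiffle) hNcard
    linarith
  refine ⟨?_, hreal⟩
  rcases eq_or_lt_of_le hr with h4 | h4
  · -- r = 4
    by_cases hSe : S = ∅
    · subst hSe
      have hFU : F = Set.univ := by
        ext v; simp [hF, Fset]
      have hsub : R ⊆ F ∩ B := by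
        rw [hFU]
        exact fun v hv => ⟨trivial, subset_gBall_one R hv⟩
      exact le_trans hR2 (Set.ncard_le_ncard hsub (Set.toFinite _))
    · exfalso
      obtain ⟨u, hu⟩ := Finset.nonempty_of_ne_empty hSe
      have hu2 : ((Set.univ \ gBall G (↑({u} : Finset V)) 1).ncard : ℝ) ≤ r / 4 := by
        refine h2 {u} ?_
        simp [← h4]
      have hsub : F ⊆ Set.univ \ gBall G (↑({u} : Finset V)) 1 := by
        intro v hv
        refine ⟨trivial, ?_⟩
        rintro ⟨x, hx, hxe⟩
        simp only [Finset.coe_singleton, Set.mem_singleton_iff] at hx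
        rw [hx] at hxe
        rw [hv u hu] at hxe
        have : G.diam ≤ 1 := by exact_mod_cast hxe
        omega
      have : (F.ncard : ℝ) ≤ r / 4 :=
        le_trans (by exact_mod_cast Set.ncard_le_ncard hsub (Set.toFinite _)) hu2
      linarith
  · rcases le_or_gt 8 r with h8 | h8
    · have : (2 : ℝ) ≤ ((F ∩ B).ncard : ℝ) := le_trans (by linarith) hreal
      exact_mod_cast this
    · have hN1 : (Set.univ \ B).ncard ≤ 1 := by
        by_contra hcon
        have : (2 : ℝ) ≤ ((Set.univ \ B).ncard : ℝ) := by exact_mod_cast by omega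
        linarith
      have hF3 : 3 ≤ F.ncard := by
        by_contra hcon
        have : (F.ncard : ℝ) ≤ 2 := by exact_mod_cast by omega
        linarith
      omega

lemma Cset_card {G : SimpleGraph V} {σ : CopStrategy V} (hD : 2 ≤ G.diam)
    {s r : ℝ} (hr : 4 ≤ r)
    (h1 : ∀ S : Finset V, (S.card : ℝ) ≤ s →
      r / 2 ≤ (({v : V | ∀ u ∈ S, G.edist u v = (G.diam : ℕ∞)}).ncard : ℝ))
    (h2 : ∀ R : Finset V, r / 4 ≤ (R.card : ℝ) →
      ((Set.univ \ gBall G ↑R 1).ncard : ℝ) ≤ r / 4)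
    (hσ : ∀ h, ((σ h).card : ℝ) ≤ s) (t : ℕ) :
    2 ≤ (Cset G σ t).ncard ∧ r / 4 ≤ ((Cset G σ t).ncard : ℝ) := by
  induction t with
  | zero =>
    have hbase : r / 2 ≤ ((Cset G σ 0).ncard : ℝ) := h1 _ (hσ _)
    constructor
    · have : (2 : ℝ) ≤ ((Cset G σ 0).ncard : ℝ) := le_trans (by linarith) hbase
      exact_mod_cast this
    · linarith
  | succ t ih =>
    rw [Cset_succ]
    exact step_card hD hr h1 h2 (hσ _) ih.1 ih.2

lemma not_copsWin {G : SimpleGraph V} (hD : 2 ≤ G.diam)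
    {s r : ℝ} (hr : 4 ≤ r)
    (h1 : ∀ S : Finset V, (S.card : ℝ) ≤ s →
      r / 2 ≤ (({v : V | ∀ u ∈ S, G.edist u v = (G.diam : ℕ∞)}).ncard : ℝ))
    (h2 : ∀ R : Finset V, r / 4 ≤ (R.card : ℝ) →
      ((Set.univ \ gBall G ↑R 1).ncard : ℝ) ≤ r / 4)
    (k : ℕ) (hk : (k : ℝ) ≤ s) : ¬ CopsWin G k := by
  rintro ⟨σ, hcard, hwin⟩
  have hσ : ∀ h, ((σ h).card : ℝ) ≤ s := fun h => by rw [hcard h]; exact hk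
  have hinv := Cset_card hD hr h1 h2 hσ
  have hne : ∀ t, (Cset G σ t).Nonempty := fun t =>
    Set.nonempty_of_ncard_ne_zero (by have := (hinv t).1; omega)
  obtain ⟨w, hwalk, hwC⟩ := exists_infinite_walk hne
  obtain ⟨t, ht⟩ := hwin w hwalk
  obtain ⟨v', hv', hvne⟩ : ∃ v', v' ∈ Cset G σ t ∧ v' ≠ w t :=
    Set.exists_ne_of_one_lt_ncard (by have := (hinv t).1; omega) (w t)
  obtain ⟨w', hwalk', hwmem', hconst'⟩ := exists_walk_to t v' hv'
  have hH : gameHistory G σ w' (t + 1) = gameHistory G σ w (t + 1) := by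
    rw [gameHistory_eq_fakeHist (t + 1) (fun t' ht' => hwmem' t' (Nat.lt_succ_iff.mp ht')),
        gameHistory_eq_fakeHist (t + 1) (fun t' _ => hwC t')]
  exact hvne ((hconst' t le_rfl).symm.trans (ht w' hwalk' hH))

lemma copsWin_univ (G : SimpleGraph V) (hconn : G.Connected) :
    CopsWin G (Fintype.card V) := by
  classical
  refine ⟨fun _ => Finset.univ, fun _ => Finset.card_univ, fun w hw => ⟨0, fun w' hw' hH => ?_⟩⟩
  have hp : probe G Finset.univ (w' 0) = probe G Finset.univ (w 0) := by
    simpa [gameHistory] using hH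
  have h2' := congrArg (fun p : Finset V × (V → ℕ) => p.2 (w 0)) hp
  simp only [probe, Finset.mem_univ, if_true] at h2'
  have : G.dist (w 0) (w' 0) = 0 := by
    rw [h2', SimpleGraph.dist_self]
  exact ((hconn.dist_eq_zero_iff).mp this).symm

end LocAux

end AuxRobber

theorem stmt11_robber_wins
    {V : Type*} [Fintype V] [DecidableEq V] (G : SimpleGraph V)
    (hconn : G.Connected) (hD : 2 ≤ G.diam)
    (s r : ℝ) (hs : 0 < s) (hr0 : 0 < r) (hr : 4 ≤ r)
    (h1 : ∀ S : Finset V, (S.card : ℝ) ≤ s →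
      r / 2 ≤ (({v : V | ∀ u ∈ S, G.edist u v = (G.diam : ℕ∞)}).ncard : ℝ))
    (h2 : ∀ R : Finset V, r / 4 ≤ (R.card : ℝ) →
      ((Set.univ \ gBall G ↑R 1).ncard : ℝ) ≤ r / 4) :
    ¬ CopsWin G ⌊s⌋₊ ∧ s < (localizationNumber G : ℝ) := by
  have hnot : ∀ k : ℕ, (k : ℝ) ≤ s → ¬ CopsWin G k :=
    fun k hk => LocAux.not_copsWin hD hr h1 h2 k hk
  constructor
  · exact hnot _ (Nat.floor_le hs.le)
  · by_contra hle
    push_neg at hle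
    have hne : {k | CopsWin G k}.Nonempty := ⟨_, LocAux.copsWin_univ G hconn⟩
    exact hnot _ hle (Nat.sInf_mem hne)
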